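/- arXiv:2411.03469 — 8 statements merged into one kernel-verified Lean document; each statement's English description precedes it below -/
import Mathlib

section
/- Let a, b ≥ 2 be integers with (a,b) ≠ (2,2). Let Ω be the set of partitions of the set {1,…,ab} into b blocks each of size a, and let n = |Ω|. The symmetric group Sym(ab) acts faithfully on Ω (a permutation σ sends a partition to the partition whose blocks are the σ-images of the original blocks). Then the base size of Sym(ab) in this action satisfies b(Sym(ab)) ≤ (1/2)·log₂ n + 6. -/
open scoped Pointwise

/-- The base size of `G` acting on `Ω`: the smallest cardinality of a subset `B ⊆ Ω`
whose pointwise stabilizer in `G` is trivial. -/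
noncomputable def baseSize (G Ω : Type*) [Group G] [MulAction G Ω] : ℕ :=
  sInf {n | ∃ B : Finset Ω, B.card = n ∧ ∀ g : G, (∀ ω ∈ B, g • ω = ω) → g = 1}

/-- `P` is a partition of `Fin N` into blocks of size `a`: its members are pairwise disjoint
subsets of size `a` covering everything. -/
def IsUniformPartition {N : ℕ} (a : ℕ) (P : Finset (Finset (Fin N))) : Prop :=
  (∀ s ∈ P, s.card = a) ∧ ((P : Set (Finset (Fin N))).PairwiseDisjoint id) ∧
    ∀ x : Fin N, ∃ s ∈ P, x ∈ s

/-- The set of partitions of `{1,…,ab}` into `b` blocks of size `a`, with the action of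
`Sym(ab)`: a permutation `σ` sends a partition to the partition whose blocks are the
`σ`-images of the original blocks. -/
def uniformPartitions (a b : ℕ) :
    SubMulAction (Equiv.Perm (Fin (a * b))) (Finset (Finset (Fin (a * b)))) where
  carrier := {P | IsUniformPartition a P}
  smul_mem' := by
    intro σ P hP
    obtain ⟨h1, h2, h3⟩ := hP
    refine ⟨?_, ?_, ?_⟩
    · intro s hs
      rw [Finset.mem_smul_finset] at hs
      obtain ⟨t, ht, rfl⟩ := hs
      rw [Finset.card_smul_finset]
      exact h1 t ht
    · intro s hs t ht hst
      rw [Finset.mem_coe, Finset.mem_smul_finset] at hs ht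
      obtain ⟨s₀, hs₀, rfl⟩ := hs
      obtain ⟨t₀, ht₀, rfl⟩ := ht
      have h₀ : s₀ ≠ t₀ := fun h => hst (by rw [h])
      have hdisj : Disjoint s₀ t₀ :=
        h2 (Finset.mem_coe.mpr hs₀) (Finset.mem_coe.mpr ht₀) h₀
      simp only [Function.onFun, id]
      rw [Finset.smul_finset_def, Finset.smul_finset_def]
      exact (Finset.disjoint_image (MulAction.injective σ)).mpr hdisj
    · intro x
      obtain ⟨s, hs, hxs⟩ := h3 (σ⁻¹ • x)
      refine ⟨σ • s, Finset.smul_mem_smul_finset hs, ?_⟩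
      simpa using Finset.smul_mem_smul_finset (a := σ) hxs

/-!
Identify `Fin (a * b)` with the grid `Fin a × Fin b`. Each partition in the base is the partition
of the grid into the fibres of `Prod.snd ∘ ψ` for a permutation `ψ` of the grid, and `σ` fixes it
iff `σ` maps these fibres onto fibres. The columns (`ψ = 1`) make `σ` permute the columns. For a
shear `ψ (i, j) = (i, j - [i ∈ S])`, comparing the points of one column shows that, once `σ`
fixes row `0`, it maps the rows in `S` to rows in `S`. For `a ≥ 3`, the shear with `S = {0}` makes
`σ` fix row `0` and shift the columns cyclically, the sets of rows with a given binary digit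
separate the rows, and one transposition of two points of the column partition rules out a
nontrivial shift. For `a = 2`, two such transpositions fix columns `0` and `1`, and the shear
with `S = {0}` propagates this around the cycle. This gives a base of size at most
`log₂ a + 5`. Shears by different sets of nonzero rows give different partitions, so
`log₂ |Ω| ≥ a - 1`, and `2 log₂ a ≤ a` finishes the proof.
-/

open Finset

section FiberPartition

variable {α β : Type*}

def PreservesFibers (σ : Equiv.Perm α) (f : α → β) : Prop :=
  ∀ x y, f (σ x) = f (σ y) ↔ f x = f y

theorem PreservesFibers.permCongr {γ : Type*} {σ : Equiv.Perm α} {f : γ → β} (e : α ≃ γ)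
    (h : PreservesFibers σ (f ∘ e)) : PreservesFibers (e.permCongr σ) f := by
  intro x y
  simpa using h (e.symm x) (e.symm y)

theorem card_filter_snd_eq [Fintype α] {a b : ℕ} (φ : α ≃ Fin a × Fin b) (j : Fin b) :
    (univ.filter fun x => (φ x).2 = j).card = a := by
  rw [← card_map φ.toEmbedding]
  have : (univ.filter fun x => (φ x).2 = j).map φ.toEmbedding = univ ×ˢ {j} := by
    ext ⟨i, k⟩
    simp [eq_comm]
  simp [this]

variable [Fintype α] [DecidableEq α] [Fintype β] [DecidableEq β]

def fiberPartition (f : α → β) : Finset (Finset α) :=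
  univ.image fun y => univ.filter (f · = y)

theorem exists_mem_fiberPartition_iff {f : α → β} {x y : α} :
    (∃ s ∈ fiberPartition f, x ∈ s ∧ y ∈ s) ↔ f x = f y := by
  simp [fiberPartition, eq_comm]

theorem apply_eq_apply_iff_of_fiberPartition_eq {γ : Type*} [Fintype γ] [DecidableEq γ]
    {f : α → β} {g : α → γ} (h : fiberPartition f = fiberPartition g) (x y : α) :
    f x = f y ↔ g x = g y := by
  rw [← exists_mem_fiberPartition_iff, h, exists_mem_fiberPartition_iff]

theorem preservesFibers_of_smul_fiberPartition {σ : Equiv.Perm α} {f : α → β}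
    (h : σ • fiberPartition f = fiberPartition f) : PreservesFibers σ f := by
  have maps : ∀ τ : Equiv.Perm α, τ • fiberPartition f = fiberPartition f →
      ∀ x y, f x = f y → f (τ x) = f (τ y) := by
    intro τ hτ x y hxy
    obtain ⟨s, hs, hx, hy⟩ := exists_mem_fiberPartition_iff.2 hxy
    rw [← exists_mem_fiberPartition_iff, ← hτ]
    exact ⟨τ • s, smul_mem_smul_finset hs, smul_mem_smul_finset hx, smul_mem_smul_finset hy⟩
  refine fun x y => ⟨fun hxy => ?_, maps σ h x y⟩
  simpa using maps σ⁻¹ (inv_smul_eq_iff.2 h.symm) _ _ hxy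

theorem isUniformPartition_fiberPartition {N a : ℕ} {f : Fin N → β}
    (hf : ∀ y, (univ.filter (f · = y)).card = a) : IsUniformPartition a (fiberPartition f) := by
  refine ⟨?_, ?_, fun x => exists_mem_fiberPartition_iff.2 (rfl : f x = f x) |>.imp
    fun s hs => ⟨hs.1, hs.2.1⟩⟩
  · simp only [fiberPartition, mem_image, mem_univ, true_and]
    rintro _ ⟨y, rfl⟩
    exact hf y
  · simp only [fiberPartition, coe_image, coe_univ, Set.image_univ]
    rintro _ ⟨y, rfl⟩ _ ⟨y', rfl⟩ hne
    exact disjoint_filter.2 fun x _ hx hx' => hne (by rw [← hx, ← hx'])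

end FiberPartition

theorem Fin.one_ne_zero_of_two_le {n : ℕ} [NeZero n] (h : 2 ≤ n) : (1 : Fin n) ≠ 0 := by
  rw [Ne, Fin.one_eq_zero_iff]
  omega

theorem Fin.two_ne_zero_of_three_le {n : ℕ} [NeZero n] (h : 3 ≤ n) : (2 : Fin n) ≠ 0 := by
  simp [Fin.ext_iff, Nat.mod_eq_of_lt h]

theorem Fin.two_ne_one_of_three_le {n : ℕ} [NeZero n] (h : 3 ≤ n) : (2 : Fin n) ≠ 1 := by
  simp [Fin.ext_iff, Nat.mod_eq_of_lt h, Nat.mod_eq_of_lt (show 1 < n by omega)]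

theorem Fin.one_add_one_ne_zero_of_three_le {n : ℕ} [NeZero n] (h : 3 ≤ n) :
    (1 : Fin n) + 1 ≠ 0 := by
  simp [Fin.ext_iff, Fin.val_add, Nat.mod_eq_of_lt h, Nat.mod_eq_of_lt (show 1 < n by omega)]

theorem Fin.sub_ite_eq_sub_ite_iff {b : ℕ} [NeZero b] (hb : 2 ≤ b) (c : Fin b) {P Q : Prop}
    [Decidable P] [Decidable Q] :
    (c - if P then 1 else 0) = (c - if Q then 1 else 0) ↔ (P ↔ Q) := by
  have := Fin.one_ne_zero_of_two_le hb
  rw [sub_right_inj]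
  split_ifs <;> simp_all [eq_comm]

open Fin.NatCast in
theorem Fin.induction_add_one {b : ℕ} [NeZero b] {P : Fin b → Prop} (zero : P 0)
    (succ : ∀ j, P j → P (j + 1)) (j : Fin b) : P j := by
  rw [← Fin.cast_val_eq_self j]
  induction (j : ℕ) with
  | zero => simpa using zero
  | succ k ih => rw [Nat.cast_add_one]; exact succ _ ih

theorem Nat.two_mul_le_two_pow (k : ℕ) : 2 * k ≤ 2 ^ k := by
  rcases k with _ | k
  · simp
  · have := Nat.lt_two_pow_self (n := k)
    rw [pow_succ]
    omega

section Grid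

variable {a b : ℕ}

/-- The image under `ψ⁻¹` of the partition of the grid into columns, transported to
`Fin (a * b)`. -/
def partitionOf (ψ : Equiv.Perm (Fin a × Fin b)) : uniformPartitions a b :=
  ⟨fiberPartition fun x => (ψ (finProdFinEquiv.symm x)).2,
    isUniformPartition_fiberPartition (card_filter_snd_eq (finProdFinEquiv.symm.trans ψ))⟩

theorem preservesFibers_of_smul_partitionOf {g : Equiv.Perm (Fin (a * b))}
    {ψ : Equiv.Perm (Fin a × Fin b)} (h : g • partitionOf ψ = partitionOf ψ) :
    PreservesFibers (finProdFinEquiv.symm.permCongr g) fun p => (ψ p).2 :=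
  .permCongr _ <| preservesFibers_of_smul_fiberPartition <| congrArg Subtype.val h

theorem snd_eq_iff_of_partitionOf_eq {ψ ψ' : Equiv.Perm (Fin a × Fin b)}
    (h : partitionOf ψ = partitionOf ψ') (p q : Fin a × Fin b) :
    (ψ p).2 = (ψ q).2 ↔ (ψ' p).2 = (ψ' q).2 := by
  simpa using apply_eq_apply_iff_of_fiberPartition_eq (congrArg Subtype.val h)
    (finProdFinEquiv p) (finProdFinEquiv q)

/-- The block `k` of `partitionOf (shear S)` is `(Sᶜ × {k}) ∪ (S × {k + 1})`. -/
def shear [NeZero b] (S : Finset (Fin a)) : Equiv.Perm (Fin a × Fin b) :=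
  (Equiv.refl _).prodShear fun i => Equiv.subRight (if i ∈ S then 1 else 0)

@[simp]
theorem shear_apply [NeZero b] (S : Finset (Fin a)) (p : Fin a × Fin b) :
    shear S p = (p.1, p.2 - if p.1 ∈ S then 1 else 0) :=
  rfl

theorem shear_snd_eq_iff_of_zero_notMem [NeZero a] [NeZero b] (hb : 2 ≤ b)
    {S : Finset (Fin a)} (h0 : 0 ∉ S) (i : Fin a) (j : Fin b) :
    (shear S (i, j)).2 = (shear S (0, j)).2 ↔ i ∉ S := by
  simp only [shear_apply, Fin.sub_ite_eq_sub_ite_iff hb, h0, iff_false]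

/-- `partitionOf (crossSwap x y)` is the partition into columns with `(1, x)` and `(0, y)`
exchanged. -/
def crossSwap [NeZero a] (x y : Fin b) : Equiv.Perm (Fin a × Fin b) :=
  Equiv.swap (1, x) (0, y)

theorem crossSwap_zero_snd_eq_iff [NeZero a] (ha : 2 ≤ a) {x y : Fin b} (hxy : x ≠ y)
    (j : Fin b) :
    (crossSwap x y ((0 : Fin a), j)).2 = (crossSwap x y ((1 : Fin a), j)).2 ↔ j ≠ x ∧ j ≠ y := by
  have h01 : (0 : Fin a) ≠ 1 := (Fin.one_ne_zero_of_two_le ha).symm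
  by_cases hx : j = x
  · subst hx
    simp [crossSwap, Equiv.swap_apply_def, h01, hxy]
  by_cases hy : j = y
  · subst hy
    simp [crossSwap, Equiv.swap_apply_def, h01.symm, hx, hxy]
  simp [crossSwap, Equiv.swap_apply_def, h01, hx, hy]

def bitSet (t : ℕ) : Finset (Fin a) :=
  univ.filter fun i => (i : ℕ).testBit t

theorem zero_notMem_bitSet [NeZero a] (t : ℕ) : (0 : Fin a) ∉ bitSet t := by
  simp [bitSet]

theorem exists_bitSet_of_ne {i i' : Fin a} (h : i ≠ i') :
    ∃ t < Nat.log 2 a + 1, ¬(i ∈ bitSet t ↔ i' ∈ bitSet t) := by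
  obtain ⟨t, ht⟩ : ∃ t, (i : ℕ).testBit t ≠ (i' : ℕ).testBit t := by
    by_contra! h'
    exact h (Fin.ext (Nat.eq_of_testBit_eq h'))
  refine ⟨t, ?_, fun hiff => ht (Bool.eq_iff_iff.2 (by simpa [bitSet] using hiff))⟩
  by_contra! hle
  have hlt (k : Fin a) : (k : ℕ) < 2 ^ t := k.isLt.trans_le
    ((Nat.lt_pow_succ_log_self one_lt_two a).le.trans (Nat.pow_le_pow_right two_pos hle))
  exact ht (by rw [Nat.testBit_eq_false_of_lt (hlt i), Nat.testBit_eq_false_of_lt (hlt i')])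

end Grid

section Rigidity

variable {a b : ℕ} {σ : Equiv.Perm (Fin a × Fin b)}

theorem PreservesFibers.snd_apply [NeZero a] (hcol : PreservesFibers σ Prod.snd) (i : Fin a)
    (j : Fin b) : (σ (i, j)).2 = (σ (0, j)).2 :=
  (hcol _ _).2 rfl

theorem PreservesFibers.fst_apply_ne (hcol : PreservesFibers σ Prod.snd) {i i' : Fin a}
    (h : i ≠ i') (j : Fin b) : (σ (i, j)).1 ≠ (σ (i', j)).1 := fun h' =>
  h (congrArg Prod.fst (σ.injective (Prod.ext h' ((hcol _ _).2 rfl))))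

variable [NeZero a] [NeZero b]

theorem shear_zero_apply_one_eq (ha : 2 ≤ a) (hQ : PreservesFibers σ fun p => (shear {0} p).2)
    (j : Fin b) : (shear {0} (σ (1, j))).2 = (shear {0} (σ (0, j + 1))).2 :=
  (hQ _ _).2 (by simp [Fin.one_ne_zero_of_two_le ha])

theorem fst_apply_mem_iff (hb : 2 ≤ b) (hcol : PreservesFibers σ Prod.snd)
    (hzero : ∀ j, (σ (0, j)).1 = 0) {S : Finset (Fin a)} (h0 : 0 ∉ S)
    (hS : PreservesFibers σ fun p => (shear S p).2) (i : Fin a) (j : Fin b) :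
    (σ (i, j)).1 ∈ S ↔ i ∈ S := by
  have := hS (i, j) (0, j)
  simp only [shear_apply, hcol.snd_apply i j, hzero, Fin.sub_ite_eq_sub_ite_iff hb, h0, iff_false]
    at this
  exact not_iff_not.1 this

theorem fst_apply_zero_and_snd_apply_add_one (ha : 2 ≤ a) (hb : 2 ≤ b)
    (hcol : PreservesFibers σ Prod.snd) (hQ : PreservesFibers σ fun p => (shear {0} p).2)
    {j : Fin b} (h1 : (σ (1, j)).1 ≠ 0) :
    (σ (0, j + 1)).1 = 0 ∧ (σ (0, j + 1)).2 = (σ (0, j)).2 + 1 := by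
  have hrel := shear_zero_apply_one_eq ha hQ j
  simp only [shear_apply, hcol.snd_apply 1 j, mem_singleton, h1, if_false, sub_zero] at hrel
  by_cases h0 : (σ (0, j + 1)).1 = 0
  · rw [if_pos h0] at hrel
    exact ⟨h0, eq_add_of_sub_eq hrel.symm⟩
  · rw [if_neg h0, sub_zero] at hrel
    exact absurd ((hcol _ _).1 hrel).symm (by simpa using Fin.one_ne_zero_of_two_le hb)

theorem fst_apply_one_ne_zero (ha : 3 ≤ a) (hb : 2 ≤ b) (hcol : PreservesFibers σ Prod.snd)
    (hQ : PreservesFibers σ fun p => (shear {0} p).2) (j : Fin b) : (σ (1, j)).1 ≠ 0 := by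
  have h10 : (1 : Fin a) ≠ 0 := Fin.one_ne_zero_of_two_le (by omega)
  have h20 := Fin.two_ne_zero_of_three_le ha
  have h21 := Fin.two_ne_one_of_three_le ha
  -- `(1, j)` and `(2, j)` share a block of the shear, and their images lie in one column.
  have h := (hQ (1, j) (2, j)).2 (by simp [h10, h20])
  simp only [shear_apply, hcol.snd_apply 1 j, hcol.snd_apply 2 j, mem_singleton,
    Fin.sub_ite_eq_sub_ite_iff hb] at h
  exact fun h1 => hcol.fst_apply_ne h21.symm j (h1.trans (h.1 h1).symm)

theorem fst_apply_eq (hb : 2 ≤ b) (hcol : PreservesFibers σ Prod.snd)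
    (hzero : ∀ j, (σ (0, j)).1 = 0)
    (hbits : ∀ t < Nat.log 2 a + 1, PreservesFibers σ fun p => (shear (bitSet t) p).2)
    (p : Fin a × Fin b) : (σ p).1 = p.1 := by
  by_contra hne
  obtain ⟨t, ht, hsep⟩ := exists_bitSet_of_ne hne
  exact hsep (fst_apply_mem_iff hb hcol hzero (zero_notMem_bitSet t) (hbits t ht) p.1 p.2)

theorem snd_apply_zero_eq_zero (ha : 3 ≤ a) (hb : 2 ≤ b) (hcol : PreservesFibers σ Prod.snd)
    (hrow : ∀ p, (σ p).1 = p.1) (hstep : (σ (0, 1)).2 = (σ (0, 0)).2 + 1)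
    (hX : PreservesFibers σ fun p => (crossSwap 0 1 p).2) : (σ (0, 0)).2 = 0 := by
  have h10 : (1 : Fin a) ≠ 0 := Fin.one_ne_zero_of_two_le (by omega)
  have h20 := Fin.two_ne_zero_of_three_le ha
  have h21 := Fin.two_ne_one_of_three_le ha
  set c := (σ (0, 0)).2
  have h := (hX (2, 0) (0, 1)).2 (by
    simp [crossSwap, Equiv.swap_apply_of_ne_of_ne, h20, h21])
  rw [show σ (2, 0) = (2, c) from Prod.ext (hrow _) (hcol.snd_apply _ _),
    show σ (0, 1) = (0, c + 1) from Prod.ext (hrow _) hstep] at h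
  by_contra hc
  have hc1 : c + 1 ≠ 1 := fun h' => hc (by simpa using h')
  dsimp only at h
  rw [crossSwap, Equiv.swap_apply_of_ne_of_ne (by simp [h21]) (by simp [h20]),
    Equiv.swap_apply_of_ne_of_ne (by simp [h10.symm]) (by simp [hc1])] at h
  exact Fin.one_ne_zero_of_two_le hb (left_eq_add.1 h)

theorem eq_one_of_preservesFibers_of_three_le (ha : 3 ≤ a) (hb : 2 ≤ b)
    (hcol : PreservesFibers σ Prod.snd)
    (hQ : PreservesFibers σ fun p => (shear {0} p).2)
    (hbits : ∀ t < Nat.log 2 a + 1, PreservesFibers σ fun p => (shear (bitSet t) p).2)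
    (hX : PreservesFibers σ fun p => (crossSwap 0 1 p).2) : σ = 1 := by
  have hshift (j : Fin b) := fst_apply_zero_and_snd_apply_add_one (by omega) hb hcol hQ
    (fst_apply_one_ne_zero ha hb hcol hQ j)
  have hzero (j : Fin b) : (σ (0, j)).1 = 0 := by simpa using (hshift (j - 1)).1
  have hrow := fst_apply_eq hb hcol hzero hbits
  have hcol0 : (σ (0, 0)).2 = 0 :=
    snd_apply_zero_eq_zero ha hb hcol hrow (by simpa using (hshift 0).2) hX
  have hsnd : ∀ j, (σ (0, j)).2 = j :=
    Fin.induction_add_one hcol0 fun j hj => by rw [(hshift j).2, hj]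
  ext ⟨i, j⟩ : 1
  exact Prod.ext (hrow _) ((hcol.snd_apply i j).trans (hsnd j))

end Rigidity

section RigidityTwo

variable {b : ℕ} {σ : Equiv.Perm (Fin 2 × Fin b)}

theorem snd_apply_ne_pair_iff (hcol : PreservesFibers σ Prod.snd) {x y : Fin b} (hxy : x ≠ y)
    (hX : PreservesFibers σ fun p => (crossSwap x y p).2) (j : Fin b) :
    (σ (0, j)).2 ≠ x ∧ (σ (0, j)).2 ≠ y ↔ j ≠ x ∧ j ≠ y := by
  rw [← crossSwap_zero_snd_eq_iff le_rfl hxy, ← crossSwap_zero_snd_eq_iff le_rfl hxy,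
    ← hX (0, j) (1, j)]
  have hne := hcol.fst_apply_ne (show (0 : Fin 2) ≠ 1 by decide) j
  have hsnd := hcol.snd_apply 1 j
  -- `σ` maps the two points of column `j` onto the two points of a single column.
  generalize σ (0, j) = p, σ (1, j) = q at hne hsnd ⊢
  obtain ⟨r, c⟩ := p
  obtain ⟨r', c'⟩ := q
  fin_cases r <;> fin_cases r' <;> simp_all [eq_comm]

theorem eq_one_of_preservesFibers_of_two [NeZero b] (hb : 3 ≤ b)
    (hcol : PreservesFibers σ Prod.snd)
    (hQ : PreservesFibers σ fun p => (shear {0} p).2)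
    (hX₀₁ : PreservesFibers σ fun p => (crossSwap 0 1 p).2)
    (hX₁₂ : PreservesFibers σ fun p => (crossSwap 1 2 p).2) : σ = 1 := by
  have h01 : (0 : Fin b) ≠ 1 := (Fin.one_ne_zero_of_two_le (by omega)).symm
  have h02 := (Fin.two_ne_zero_of_three_le hb).symm
  have h12 := (Fin.two_ne_one_of_three_le hb).symm
  have hm₀₁ := snd_apply_ne_pair_iff hcol h01 hX₀₁
  have hm₁₂ := snd_apply_ne_pair_iff hcol h12 hX₁₂
  have hπ1 : (σ (0, 1)).2 = 1 := by
    have := hm₀₁ 1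
    have := hm₁₂ 1
    grind
  have hπ0 : (σ (0, 0)).2 = 0 := by
    have := hm₀₁ 0
    have := (hcol (0, 0) (0, 1)).not.2 h01
    grind
  -- Otherwise `σ` exchanges the rows of column `0`, and the shear sends column `1` to `-1`.
  have hstart : (σ (1, 0)).1 = 1 := by
    by_contra h
    have hrel := shear_zero_apply_one_eq le_rfl hQ 0
    simp only [shear_apply, hcol.snd_apply 1 0, hπ0, mem_singleton,
      show (σ (1, 0)).1 = 0 by omega, if_true, zero_add, hπ1] at hrel
    split_ifs at hrel
    · exact h01 (sub_eq_zero.1 (hrel.trans (sub_self 1)))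
    · rw [sub_zero, sub_eq_iff_eq_add] at hrel
      exact Fin.one_add_one_ne_zero_of_three_le hb hrel.symm
  have key : ∀ j, (σ (1, j)).1 = 1 ∧ (σ (0, j)).2 = j := by
    refine Fin.induction_add_one ⟨hstart, hπ0⟩ fun j ⟨h1, hj⟩ => ?_
    obtain ⟨h0, hsnd⟩ :=
      fst_apply_zero_and_snd_apply_add_one le_rfl (by omega) hcol hQ (by rw [h1]; decide)
    have := hcol.fst_apply_ne (show (1 : Fin 2) ≠ 0 by decide) (j + 1)
    exact ⟨by omega, hsnd.trans (by rw [hj])⟩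
  ext ⟨i, j⟩ : 1
  have := hcol.fst_apply_ne (show (0 : Fin 2) ≠ 1 by decide) j
  refine Prod.ext ?_ ((hcol.snd_apply i j).trans (key j).2)
  fin_cases i <;> simp [key j] at this ⊢
  omega

end RigidityTwo

section Base

variable {a b : ℕ} [NeZero a] [NeZero b]

def baseFamily (a b : ℕ) [NeZero a] [NeZero b] : Finset (Equiv.Perm (Fin a × Fin b)) :=
  {1, shear {0}, crossSwap 0 1, crossSwap 1 2} ∪
    (range (Nat.log 2 a + 1)).image fun t => shear (bitSet t)

theorem card_baseFamily_le : (baseFamily a b).card ≤ Nat.log 2 a + 5 := by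
  refine (card_union_le _ _).trans ?_
  have h4 := card_le_four (a := (1 : Equiv.Perm (Fin a × Fin b))) (b := shear {0})
    (c := crossSwap 0 1) (d := crossSwap 1 2)
  have himg := (card_image_le (s := range (Nat.log 2 a + 1))
    (f := fun t => (shear (bitSet t) : Equiv.Perm (Fin a × Fin b)))).trans (card_range _).le
  omega

theorem eq_one_of_forall_mem_baseFamily (ha : 2 ≤ a) (hb : 2 ≤ b) (hab : ¬(a = 2 ∧ b = 2))
    {σ : Equiv.Perm (Fin a × Fin b)}
    (h : ∀ ψ ∈ baseFamily a b, PreservesFibers σ fun p => (ψ p).2) : σ = 1 := by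
  have hcol : PreservesFibers σ Prod.snd := by simpa using h 1 (by simp [baseFamily])
  have hQ := h (shear {0}) (by simp [baseFamily])
  have hX := h (crossSwap 0 1) (by simp [baseFamily])
  obtain rfl | ha3 := ha.eq_or_lt
  · exact eq_one_of_preservesFibers_of_two (by omega) hcol hQ hX (h _ (by simp [baseFamily]))
  · exact eq_one_of_preservesFibers_of_three_le ha3 hb hcol hQ
      (fun t ht => h _ (by simp only [baseFamily, mem_union, mem_image, mem_range]; tauto)) hX

theorem exists_base_card_le (ha : 2 ≤ a) (hb : 2 ≤ b) (hab : ¬(a = 2 ∧ b = 2)) :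
    ∃ B : Finset (uniformPartitions a b), B.card ≤ Nat.log 2 a + 5 ∧
      ∀ g : Equiv.Perm (Fin (a * b)), (∀ ω ∈ B, g • ω = ω) → g = 1 := by
  refine ⟨(baseFamily a b).image partitionOf, card_image_le.trans card_baseFamily_le,
    fun g hg => ?_⟩
  have := eq_one_of_forall_mem_baseFamily ha hb hab fun ψ hψ =>
    preservesFibers_of_smul_partitionOf (hg _ (mem_image_of_mem _ hψ))
  exact finProdFinEquiv.symm.permCongr.injective (this.trans (Equiv.permCongr_refl _).symm)

end Base

theorem baseSize_le_card {G Ω : Type*} [Group G] [MulAction G Ω] (B : Finset Ω)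
    (hB : ∀ g : G, (∀ ω ∈ B, g • ω = ω) → g = 1) : baseSize G Ω ≤ B.card :=
  Nat.sInf_le ⟨B, rfl, hB⟩

theorem two_pow_le_card_uniformPartitions {a b : ℕ} (ha : 1 ≤ a) (hb : 2 ≤ b) :
    2 ^ (a - 1) ≤ Nat.card (uniformPartitions a b) := by
  have : NeZero a := ⟨by omega⟩
  have : NeZero b := ⟨by omega⟩
  have hinj : Function.Injective fun S : (univ.erase (0 : Fin a)).powerset =>
      partitionOf (b := b) (shear S.1) := by
    rintro ⟨S, hS⟩ ⟨S', hS'⟩ h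
    have h0 {T} (hT : T ∈ (univ.erase (0 : Fin a)).powerset) : 0 ∉ T :=
      fun h0 => by simpa using mem_powerset.1 hT h0
    ext i
    have := snd_eq_iff_of_partitionOf_eq h (i, 0) (0, 0)
    rw [shear_snd_eq_iff_of_zero_notMem hb (h0 hS), shear_snd_eq_iff_of_zero_notMem hb (h0 hS')]
      at this
    exact not_iff_not.1 this
  calc 2 ^ (a - 1) = Nat.card (univ.erase (0 : Fin a)).powerset := by
        rw [Nat.card_eq_fintype_card, Fintype.card_coe, card_powerset,
          card_erase_of_mem (mem_univ _), card_univ, Fintype.card_fin]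
    _ ≤ _ := Nat.card_le_card_of_injective _ hinj

/-- For integers `a, b ≥ 2` with `(a,b) ≠ (2,2)`, the base size of `Sym(ab)` acting on the
set `Ω` of partitions of `{1,…,ab}` into `b` blocks of size `a` is at most
`(1/2)·log₂ |Ω| + 6`. -/
theorem baseSize_partitions_le (a b : ℕ) (ha : 2 ≤ a) (hb : 2 ≤ b)
    (hab : ¬(a = 2 ∧ b = 2)) :
    (baseSize (Equiv.Perm (Fin (a * b))) (uniformPartitions a b) : ℝ) ≤
      (1 / 2) * Real.logb 2 (Nat.card (uniformPartitions a b)) + 6 := by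
  have : NeZero a := ⟨by omega⟩
  have : NeZero b := ⟨by omega⟩
  obtain ⟨B, hBcard, hB⟩ := exists_base_card_le ha hb hab
  have hbase : (baseSize (Equiv.Perm (Fin (a * b))) (uniformPartitions a b) : ℝ) ≤
      Nat.log 2 a + 5 := by exact_mod_cast (baseSize_le_card B hB).trans hBcard
  have hlog : (2 * Nat.log 2 a : ℝ) ≤ a := by
    exact_mod_cast (Nat.two_mul_le_two_pow _).trans (Nat.pow_log_le_self 2 (by omega))
  have hcard : (2 : ℝ) ^ ((a - 1 : ℕ) : ℝ) ≤ Nat.card (uniformPartitions a b) := by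
    rw [Real.rpow_natCast]
    exact_mod_cast two_pow_le_card_uniformPartitions (by omega) hb
  have hn := (Real.le_logb_iff_rpow_le one_lt_two ((by positivity : (0 : ℝ) < _).trans_le
    hcard)).2 hcard
  rw [Nat.cast_sub (by omega : 1 ≤ a), Nat.cast_one] at hn
  linarith
end

section
/- Let F be a finite field with |F| ≥ 4, let d ≥ 1, and let V = F^d. Let G be any subgroup of the affine group AGL_d(F) = AGL(V), acting naturally on V, and set n = |F|^d. Then b(G) ≤ (1/2)·log₂ n + 6. -/
/-- The natural (faithful) action of the affine group `AGL(V) = V ≃ᵃ[k] V` on `V`. -/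
instance AffineEquiv.applyMulAction (k P : Type*) [Ring k] [AddCommGroup P] [Module k P] :
    MulAction (P ≃ᵃ[k] P) P where
  smul f v := f v
  one_smul _ := rfl
  mul_smul _ _ _ := rfl

/-- If `F` is a finite field with `|F| ≥ 4`, `d ≥ 1` and `G` is any subgroup of the affine
group `AGL_d(F)` acting naturally on `V = F^d` of cardinality `n = |F|^d`, then
`b(G) ≤ (1/2)·log₂ n + 6`. -/
theorem baseSize_affine_le (F : Type*) [Field F] [Fintype F] (hF : 4 ≤ Fintype.card F)
    (d : ℕ) (hd : 1 ≤ d)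
    (G : Subgroup ((Fin d → F) ≃ᵃ[F] (Fin d → F))) :
    (baseSize G (Fin d → F) : ℝ) ≤
      (1 / 2) * Real.logb 2 ((Fintype.card F : ℝ) ^ d) + 6 := by
  classical
  set B : Finset (Fin d → F) :=
    insert 0 (Finset.image (fun i => Pi.single i (1 : F)) Finset.univ) with hB
  have hbase : baseSize G (Fin d → F) ≤ B.card := by
    apply Nat.sInf_le
    refine ⟨B, rfl, ?_⟩
    intro g hg
    have h0 : (g : (Fin d → F) ≃ᵃ[F] (Fin d → F)) 0 = 0 := by
      have := hg 0 (Finset.mem_insert_self _ _)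
      exact this
    have hi : ∀ i : Fin d, (g : (Fin d → F) ≃ᵃ[F] (Fin d → F)) (Pi.single i 1) = Pi.single i 1 := by
      intro i
      have := hg (Pi.single i 1) (by
        refine Finset.mem_insert_of_mem ?_
        exact Finset.mem_image_of_mem _ (Finset.mem_univ i))
      exact this
    have hlin : ∀ x, (g : (Fin d → F) ≃ᵃ[F] (Fin d → F)) x =
        ((g : (Fin d → F) ≃ᵃ[F] (Fin d → F)) : (Fin d → F) →ᵃ[F] (Fin d → F)).linear x := by
      intro x
      have := ((g : (Fin d → F) ≃ᵃ[F] (Fin d → F)) : (Fin d → F) →ᵃ[F] (Fin d → F)).map_vadd 0 x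
      simpa [h0] using this
    have hlinid :
        ((g : (Fin d → F) ≃ᵃ[F] (Fin d → F)) : (Fin d → F) →ᵃ[F] (Fin d → F)).linear
          = LinearMap.id := by
      apply (Pi.basisFun F (Fin d)).ext
      intro i
      simp only [Pi.basisFun_apply, LinearMap.id_coe, id_eq]
      rw [← hlin]
      exact hi i
    have : (g : (Fin d → F) ≃ᵃ[F] (Fin d → F)) = 1 := by
      apply AffineEquiv.ext
      intro x
      rw [hlin x, hlinid]
      rfl
    exact Subtype.ext this
  have hcard : B.card ≤ d + 1 := by
    calc B.card ≤ (Finset.image (fun i => Pi.single i (1:F)) Finset.univ).card + 1 :=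
          Finset.card_insert_le _ _
      _ ≤ d + 1 := by
          have := Finset.card_image_le (s := (Finset.univ : Finset (Fin d)))
            (f := fun i => Pi.single i (1:F))
          simpa using Nat.add_le_add_right this 1
  have hb : (baseSize G (Fin d → F) : ℝ) ≤ (d : ℝ) + 1 := by
    exact_mod_cast le_trans hbase hcard
  refine hb.trans ?_
  have hq : (4 : ℝ) ≤ (Fintype.card F : ℝ) := by exact_mod_cast hF
  have hlog : (2 : ℝ) ≤ Real.logb 2 (Fintype.card F) := by
    have h4 : Real.logb 2 4 = 2 := by
      rw [show (4:ℝ) = 2 ^ (2:ℕ) by norm_num, Real.logb_pow]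
      simp
    calc (2:ℝ) = Real.logb 2 4 := h4.symm
      _ ≤ Real.logb 2 (Fintype.card F) := Real.logb_le_logb_of_le (b := 2) (by norm_num) (by norm_num) hq
  rw [Real.logb_pow]
  have hd' : (1 : ℝ) ≤ d := by exact_mod_cast hd
  nlinarith [Real.logb_le_logb_of_le (b := 2) (by norm_num) (by norm_num) hq]
end

section
/- Let d ≥ 2, let F = 𝔽₃ be the field with three elements, and let V = F^d. Then every subgroup G of the affine group AGL_d(3) = AGL(V), acting naturally on V, satisfies b(G) ≤ log₂ n, where n = 3^d (equivalently, b(G) ≤ d·log₂ 3). -/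
lemma two_pow_le_three_pow (d : ℕ) (hd : 2 ≤ d) : 2 ^ (d + 1) ≤ 3 ^ d := by
  induction d, hd using Nat.le_induction with
  | base => norm_num
  | succ k hk ih =>
    calc 2 ^ (k + 2) = 2 * 2 ^ (k + 1) := by ring
    _ ≤ 2 * 3 ^ k := by omega
    _ ≤ 3 * 3 ^ k := by omega
    _ = 3 ^ (k + 1) := by ring

/-- For `d ≥ 2`, every subgroup `G` of `AGL_d(3)` acting naturally on `V = 𝔽₃^d`
satisfies `b(G) ≤ log₂ n`, where `n = 3^d`. -/
theorem baseSize_affine_three_le (d : ℕ) (hd : 2 ≤ d)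
    (G : Subgroup ((Fin d → ZMod 3) ≃ᵃ[ZMod 3] (Fin d → ZMod 3))) :
    (baseSize G (Fin d → ZMod 3) : ℝ) ≤ Real.logb 2 ((3 : ℝ) ^ d) := by
  -- base: 0 and the standard basis vectors
  set B : Finset (Fin d → ZMod 3) :=
    insert 0 (Finset.image (fun i => Pi.single i (1 : ZMod 3)) Finset.univ) with hB
  have hbase : baseSize G (Fin d → ZMod 3) ≤ B.card := by
    apply Nat.sInf_le
    refine ⟨B, rfl, ?_⟩
    intro g hg
    have h0 : (g : (Fin d → ZMod 3) ≃ᵃ[ZMod 3] (Fin d → ZMod 3)) 0 = 0 :=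
      hg 0 (Finset.mem_insert_self _ _)
    have hi : ∀ i, (g : (Fin d → ZMod 3) ≃ᵃ[ZMod 3] (Fin d → ZMod 3)) (Pi.single i 1)
        = Pi.single i 1 := fun i =>
      hg _ (Finset.mem_insert_of_mem (Finset.mem_image.mpr ⟨i, Finset.mem_univ i, rfl⟩))
    set f := (g : (Fin d → ZMod 3) ≃ᵃ[ZMod 3] (Fin d → ZMod 3)) with hf
    have hlin : ∀ v : Fin d → ZMod 3, f v = f.linear v := by
      intro v
      have := f.map_vadd 0 v
      simpa [h0] using this
    have key : ∀ v : Fin d → ZMod 3, f v = v := by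
      intro v
      have hv : ∑ i, (v i) • (Pi.single i 1 : Fin d → ZMod 3) = v := by
        simp [← Pi.single_smul, Finset.univ_sum_single]
      rw [hlin, ← hv, map_sum]
      simp only [map_smul]
      congr 1
      ext i
      rw [← hlin, hi]
    have hone : (g : (Fin d → ZMod 3) ≃ᵃ[ZMod 3] (Fin d → ZMod 3)) = 1 := by
      apply AffineEquiv.ext
      intro v
      exact key v
    exact Subtype.ext hone
  have hcard : B.card ≤ d + 1 := by
    calc B.card ≤ (Finset.image (fun i => Pi.single i (1 : ZMod 3)) Finset.univ).card + 1 :=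
      Finset.card_insert_le _ _
    _ ≤ d + 1 := by
      simpa using Nat.add_le_add_right (Finset.card_image_le.trans (by simp)) 1
  have h1 : (baseSize G (Fin d → ZMod 3) : ℝ) ≤ ((d : ℝ) + 1) := by
    exact_mod_cast hbase.trans hcard
  have hle : ((2 : ℝ) ^ (d + 1)) ≤ (3 : ℝ) ^ d := by
    exact_mod_cast two_pow_le_three_pow d hd
  have h2 : ((d : ℝ) + 1) ≤ Real.logb 2 ((3 : ℝ) ^ d) := by
    calc ((d : ℝ) + 1) = Real.logb 2 ((2 : ℝ) ^ (d + 1)) := by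
          rw [Real.logb_pow]
          simp [Real.logb_self_eq_one]
    _ ≤ Real.logb 2 ((3 : ℝ) ^ d) := by
          gcongr
          all_goals norm_num
  linarith
end

section
/- Let d ≥ 1, let F = 𝔽₂ be the field with two elements, and let V = F^d. Let G be a subgroup of the affine group AGL_d(2) = AGL(V) whose natural action on V is primitive, and set n = 2^d. Then μ(G)·b(G) ≤ n·log₂ n = d·2^d. -/
/-- The minimal degree of `G` acting on `Ω`: the smallest cardinality of the support of a
non-identity element of `G`. -/
noncomputable def minDegree (G Ω : Type*) [Group G] [MulAction G Ω] : ℕ :=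
  sInf {n | ∃ g : G, g ≠ 1 ∧ n = Nat.card {ω : Ω | g • ω ≠ ω}}

/-- An action is preprimitive if it is transitive and every block is trivial. -/
def IsPreprimitive (G Ω : Type*) [Group G] [MulAction G Ω] : Prop :=
  MulAction.IsPretransitive G Ω ∧
    ∀ B : Set Ω, MulAction.IsBlock G B → MulAction.IsTrivialBlock B

lemma arith_aux (d k : ℕ) (hkd : k + 1 ≤ d) : (2 ^ d - 2 ^ k) * (k + 2) ≤ d * 2 ^ d := by
  rcases le_or_gt (k + 2) d with h | h
  · calc (2 ^ d - 2 ^ k) * (k + 2) ≤ 2 ^ d * d := Nat.mul_le_mul (Nat.sub_le _ _) h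
      _ = d * 2 ^ d := Nat.mul_comm _ _
  · have hdd : d = k + 1 := by omega
    subst hdd
    have hpow : (2:ℕ) ^ (k+1) = 2 * 2 ^ k := by ring
    rw [hpow]
    have hsub : 2 * 2 ^ k - 2 ^ k = 2 ^ k := by omega
    rw [hsub]
    calc 2 ^ k * (k + 2) ≤ 2 ^ k * (2 * (k + 1)) := Nat.mul_le_mul_left _ (by omega)
      _ = (k + 1) * (2 * 2 ^ k) := by ring

set_option maxHeartbeats 2000000 in
set_option synthInstance.maxHeartbeats 400000 in
/-- If `d ≥ 1` and `G ≤ AGL_d(2)` acts primitively on `V = 𝔽₂^d`, with `n = 2^d`, then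
`μ(G) · b(G) ≤ n · log₂ n = d · 2^d`. -/
theorem minDegree_mul_baseSize_le_affine_two (d : ℕ) (hd : 1 ≤ d)
    (G : Subgroup ((Fin d → ZMod 2) ≃ᵃ[ZMod 2] (Fin d → ZMod 2)))
    (hprim : IsPreprimitive G (Fin d → ZMod 2)) :
    minDegree G (Fin d → ZMod 2) * baseSize G (Fin d → ZMod 2) ≤ d * 2 ^ d := by
  classical
  have smul_eq : ∀ (g : G) (v : Fin d → ZMod 2),
      g • v = (g : (Fin d → ZMod 2) ≃ᵃ[ZMod 2] (Fin d → ZMod 2)) v := fun g v => rfl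
  have hcardV : Nat.card (Fin d → ZMod 2) = 2 ^ d := by
    simp [Nat.card_eq_fintype_card]
  -- faithfulness
  have faithful : ∀ g : G, (∀ ω : Fin d → ZMod 2, g • ω = ω) → g = 1 := by
    intro g hg
    exact Subtype.ext (AffineEquiv.ext fun x => hg x)
  by_cases hG : ∀ g : G, g = 1
  · have hz : minDegree G (Fin d → ZMod 2) = 0 := by
      have he : {n | ∃ g : G, g ≠ 1 ∧ n = Nat.card {ω : Fin d → ZMod 2 | g • ω ≠ ω}} = ∅ := by
        ext n
        simp only [Set.mem_setOf_eq, Set.mem_empty_iff_false, iff_false, not_exists]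
        intro g ⟨hg, _⟩
        exact hg (hG g)
      rw [minDegree, he, Nat.sInf_empty]
    simp [hz]
  push_neg at hG
  obtain ⟨g₀, hg₀⟩ := hG
  -- the set of fixed-point counts
  set S : Set ℕ := {m | ∃ g : G, g ≠ 1 ∧ m = Nat.card {ω : Fin d → ZMod 2 | g • ω = ω}} with hS
  have hSne : S.Nonempty := ⟨_, g₀, hg₀, rfl⟩
  have hSbd : ∀ m ∈ S, m < 2 ^ d := by
    rintro m ⟨g, hg, rfl⟩
    have hex : ∃ ω : Fin d → ZMod 2, g • ω ≠ ω := by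
      by_contra h
      push_neg at h
      exact hg (faithful g h)
    obtain ⟨ω₀, hω₀⟩ := hex
    rw [Nat.card_coe_set_eq]
    calc ({ω : Fin d → ZMod 2 | g • ω = ω}).ncard
        < (Set.univ : Set (Fin d → ZMod 2)).ncard := by
          exact Set.ncard_lt_ncard
            ⟨Set.subset_univ _, fun h => hω₀ (h (Set.mem_univ ω₀))⟩ Set.finite_univ
      _ = 2 ^ d := by rw [Set.ncard_univ, hcardV]
  set M : ℕ := sSup S with hM
  have hMmem : M ∈ S := Nat.sSup_mem hSne ⟨2 ^ d, fun m hm => (hSbd m hm).le⟩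
  have hMle : ∀ m ∈ S, m ≤ M := fun m hm => le_csSup ⟨2 ^ d, fun x hx => (hSbd x hx).le⟩ hm
  have hMlt : M < 2 ^ d := hSbd M hMmem
  obtain ⟨gm, hgm, hgmcard⟩ := hMmem
  -- minDegree ≤ 2^d - M
  have hmin : minDegree G (Fin d → ZMod 2) ≤ 2 ^ d - M := by
    apply Nat.sInf_le
    refine ⟨gm, hgm, ?_⟩
    have hcompl : {ω : Fin d → ZMod 2 | gm • ω ≠ ω} = {ω : Fin d → ZMod 2 | gm • ω = ω}ᶜ := by
      ext ω; simp
    rw [hcompl, Nat.card_coe_set_eq]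
    have hsum := Set.ncard_add_ncard_compl {ω : Fin d → ZMod 2 | gm • ω = ω}
    rw [hcardV] at hsum
    rw [Nat.card_coe_set_eq] at hgmcard
    omega
  by_cases hM0 : M = 0
  · -- base {0}
    have hbase : baseSize G (Fin d → ZMod 2) ≤ 1 := by
      apply Nat.sInf_le
      refine ⟨{0}, Finset.card_singleton 0, ?_⟩
      intro g hg
      by_contra hgne
      have h1 : Nat.card {ω : Fin d → ZMod 2 | g • ω = ω} ≤ M := hMle _ ⟨g, hgne, rfl⟩
      have h2 : (0 : Fin d → ZMod 2) ∈ {ω : Fin d → ZMod 2 | g • ω = ω} :=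
        hg 0 (Finset.mem_singleton_self 0)
      have h3 : 0 < Nat.card {ω : Fin d → ZMod 2 | g • ω = ω} := by
        rw [Nat.card_coe_set_eq, Set.ncard_pos]
        exact ⟨0, h2⟩
      omega
    calc minDegree G (Fin d → ZMod 2) * baseSize G (Fin d → ZMod 2)
        ≤ (2 ^ d - M) * 1 := Nat.mul_le_mul hmin hbase
      _ ≤ 2 ^ d := by omega
      _ ≤ d * 2 ^ d := Nat.le_mul_of_pos_left _ hd
  · -- M ≥ 1
    set k : ℕ := Nat.log 2 M with hk
    have h2k : 2 ^ k ≤ M := Nat.pow_log_le_self 2 hM0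
    have hMk : M < 2 ^ (k + 1) := Nat.lt_pow_succ_log_self one_lt_two M
    have hkd : k + 1 ≤ d := by
      have h1 : (2:ℕ) ^ k < 2 ^ d := lt_of_le_of_lt h2k hMlt
      have h2 := (Nat.pow_lt_pow_iff_right one_lt_two).mp h1
      omega
    set e : Fin (k + 1) → (Fin d → ZMod 2) :=
      fun i => Pi.single (Fin.castLE hkd i) 1 with he
    have heinj : Function.Injective e := by
      intro i j hij
      have h := congrFun hij (Fin.castLE hkd i)
      simp only [he, Pi.single_apply, eq_self_iff_true, if_true] at h
      split_ifs at h with hc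
      · exact Fin.castLE_injective hkd hc
      · exact absurd h.symm (zero_ne_one)
    have h0e : (0 : Fin d → ZMod 2) ∉ Finset.image e Finset.univ := by
      simp only [Finset.mem_image, not_exists]
      intro i ⟨_, hi⟩
      have h := congrFun hi (Fin.castLE hkd i)
      simp [he, Pi.single_apply] at h
    set B : Finset (Fin d → ZMod 2) := insert 0 (Finset.image e Finset.univ) with hB
    have hBcard : B.card = k + 2 := by
      rw [hB, Finset.card_insert_of_notMem h0e,
        Finset.card_image_of_injective _ heinj, Finset.card_univ, Fintype.card_fin]
    have hbase : baseSize G (Fin d → ZMod 2) ≤ k + 2 := by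
      apply Nat.sInf_le
      refine ⟨B, hBcard, ?_⟩
      intro g hg
      by_contra hgne
      have h1 : Nat.card {ω : Fin d → ZMod 2 | g • ω = ω} ≤ M := hMle _ ⟨g, hgne, rfl⟩
      have g0 : (g : (Fin d → ZMod 2) ≃ᵃ[ZMod 2] (Fin d → ZMod 2)) 0 = 0 := by
        rw [← smul_eq]
        exact hg 0 (Finset.mem_insert_self 0 _)
      have glin : ∀ x : Fin d → ZMod 2,
          (g : (Fin d → ZMod 2) ≃ᵃ[ZMod 2] (Fin d → ZMod 2)) x
            = (g : (Fin d → ZMod 2) ≃ᵃ[ZMod 2] (Fin d → ZMod 2)).linear x := by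
        intro x
        have h := AffineEquiv.map_vadd
          (g : (Fin d → ZMod 2) ≃ᵃ[ZMod 2] (Fin d → ZMod 2)) 0 x
        simpa [g0] using h
      have gei : ∀ i,
          (g : (Fin d → ZMod 2) ≃ᵃ[ZMod 2] (Fin d → ZMod 2)).linear (e i) = e i := by
        intro i
        rw [← glin, ← smul_eq]
        exact hg (e i) (by simp [hB])
      have hinj : ∃ φ : (Fin (k + 1) → ZMod 2) → {ω : Fin d → ZMod 2 | g • ω = ω},
          Function.Injective φ := by
        refine ⟨fun c => ⟨∑ i, c i • e i, ?_⟩, ?_⟩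
        · show g • (∑ i, c i • e i) = ∑ i, c i • e i
          rw [smul_eq, glin, map_sum]
          refine Finset.sum_congr rfl fun i _ => ?_
          rw [map_smul, gei]
        · intro c c' hcc
          have hsum : (∑ i, c i • e i) = ∑ i, c' i • e i := congrArg Subtype.val hcc
          funext i
          have h := congrFun hsum (Fin.castLE hkd i)
          simpa [he, Finset.sum_apply, Pi.single_apply, Fin.castLE_inj,
            Finset.sum_ite_eq] using h
      obtain ⟨φ, hφ⟩ := hinj
      have h2 : 2 ^ (k + 1) ≤ Nat.card {ω : Fin d → ZMod 2 | g • ω = ω} := by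
        have h3 := Nat.card_le_card_of_injective φ hφ
        rwa [Nat.card_eq_fintype_card, Fintype.card_fun, Fintype.card_fin, ZMod.card] at h3
      omega
    have hmin' : minDegree G (Fin d → ZMod 2) ≤ 2 ^ d - 2 ^ k := le_trans hmin (by omega)
    have key : (2 ^ d - 2 ^ k) * (k + 2) ≤ d * 2 ^ d := arith_aux d k hkd
    calc minDegree G (Fin d → ZMod 2) * baseSize G (Fin d → ZMod 2)
        ≤ (2 ^ d - 2 ^ k) * (k + 2) := Nat.mul_le_mul hmin' hbase
      _ ≤ d * 2 ^ d := key
end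

section
/- Let m ≥ 3 and 1 ≤ k ≤ m/2 be integers. Then the minimal degree of the alternating group Alt(m) acting on the set of k-element subsets of {1,…,m} (a permutation acts on a subset by taking its image) is at most 3·C(m−2, k−1), where C denotes the binomial coefficient. -/
/-! A 3-cycle `σ` lies in `Alt(m)`. If `σ` moves a `k`-set `s`, some `x ∈ s` has `σ x ∉ s`;
this `x` lies in the 3-element support of `σ`, and `s` is recovered from `x` and the
`(k-1)`-set `s \ {x}`, which avoids both `x` and `σ x`. So at most `3 · C(m-2, k-1)` sets move. -/

open scoped Pointwise

/-- The set of `k`-element subsets of `{1,…,m}`, with the action of `Sym(m)` by taking images. -/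
def kSubsets (m k : ℕ) : SubMulAction (Equiv.Perm (Fin m)) (Finset (Fin m)) where
  carrier := {s | s.card = k}
  smul_mem' := by
    intro σ s hs
    simpa [Finset.card_smul_finset] using hs

open Finset Equiv

theorem Finset.exists_mem_apply_notMem_of_perm_smul_ne {α : Type*} [DecidableEq α]
    {g : Perm α} {s : Finset α} (h : g • s ≠ s) : ∃ x ∈ s, g x ∉ s := by
  by_contra! hs
  refine h (eq_of_subset_of_card_le ?_ (card_smul_finset g s).ge)
  rintro _ hy
  obtain ⟨x, hx, rfl⟩ := mem_smul_finset.mp hy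
  exact hs x hx

section

variable {α : Type*} [Fintype α] [DecidableEq α]

theorem Finset.card_powersetCard_filter_mem_notMem_le {x y : α} (hxy : x ≠ y) (k : ℕ) :
    #{s ∈ powersetCard k (univ : Finset α) | x ∈ s ∧ y ∉ s} ≤
      (Fintype.card α - 2).choose (k - 1) := by
  calc #{s ∈ powersetCard k (univ : Finset α) | x ∈ s ∧ y ∉ s}
      ≤ #(powersetCard (k - 1) (univ \ {x, y})) := by
        refine card_le_card_of_injOn (·.erase x) (fun s hs => ?_)
          ((erase_injOn' x).mono fun s hs => (mem_filter.mp hs).2.1)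
        obtain ⟨hs, hx, hy⟩ := mem_filter.mp hs
        have hk := (mem_powersetCard.mp hs).2
        refine mem_powersetCard.mpr ⟨fun z hz => ?_, by rw [card_erase_of_mem hx, hk]⟩
        obtain ⟨hzx, hz⟩ := mem_erase.mp hz
        simp only [mem_sdiff, mem_univ, mem_insert, mem_singleton, true_and]
        rintro (rfl | rfl) <;> contradiction
    _ = (Fintype.card α - 2).choose (k - 1) := by
        rw [card_powersetCard, card_univ_sdiff, card_pair hxy]

theorem Equiv.Perm.card_filter_smul_ne_le (g : Perm α) (k : ℕ) :
    #{s ∈ powersetCard k (univ : Finset α) | g • s ≠ s} ≤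
      #g.support * (Fintype.card α - 2).choose (k - 1) := by
  calc #{s ∈ powersetCard k (univ : Finset α) | g • s ≠ s}
      ≤ #(g.support.biUnion fun x => {s ∈ powersetCard k univ | x ∈ s ∧ g x ∉ s}) := by
        refine card_le_card fun s hs => ?_
        obtain ⟨hs, hgs⟩ := mem_filter.mp hs
        obtain ⟨x, hx, hgx⟩ := exists_mem_apply_notMem_of_perm_smul_ne hgs
        exact mem_biUnion.mpr ⟨x, Perm.mem_support.mpr (ne_of_mem_of_not_mem hx hgx).symm,
          mem_filter.mpr ⟨hs, hx, hgx⟩⟩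
    _ ≤ _ := card_biUnion_le_card_mul _ _ _ fun x hx =>
        Finset.card_powersetCard_filter_mem_notMem_le (Perm.mem_support.mp hx).symm k

end

theorem minDegree_le_of_ne_one {G Ω : Type*} [Group G] [MulAction G Ω] {g : G} (hg : g ≠ 1) :
    minDegree G Ω ≤ Nat.card {ω : Ω | g • ω ≠ ω} :=
  Nat.sInf_le ⟨g, hg, rfl⟩

theorem kSubsets.card_moved_le {m k : ℕ} {H : Subgroup (Perm (Fin m))} (g : H) :
    Nat.card {ω : kSubsets m k | g • ω ≠ ω} ≤
      #{s ∈ powersetCard k (univ : Finset (Fin m)) | (g : Perm (Fin m)) • s ≠ s} := by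
  rw [← Nat.card_eq_finsetCard]
  refine Nat.card_le_card_of_injective
    (fun ω => ⟨ω.1.1, mem_filter.mpr ⟨mem_powersetCard.mpr ⟨subset_univ _, ω.1.2⟩,
      fun h => ω.2 (Subtype.ext h)⟩⟩) fun ω ω' h => ?_
  have h' := Subtype.ext_iff.mp h
  exact Subtype.ext (Subtype.ext h')

theorem kSubsets.minDegree_le {m k : ℕ} {H : Subgroup (Perm (Fin m))} {g : Perm (Fin m)}
    (hgH : g ∈ H) (hg : g ≠ 1) :
    minDegree H (kSubsets m k) ≤ #g.support * (m - 2).choose (k - 1) := by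
  calc minDegree H (kSubsets m k)
      ≤ Nat.card {ω : kSubsets m k | (⟨g, hgH⟩ : H) • ω ≠ ω} :=
        minDegree_le_of_ne_one (Subtype.coe_ne_coe.mp hg)
    _ ≤ #{s ∈ powersetCard k (univ : Finset (Fin m)) | g • s ≠ s} := kSubsets.card_moved_le _
    _ ≤ #g.support * (m - 2).choose (k - 1) := by
        simpa only [Fintype.card_fin] using g.card_filter_smul_ne_le k

theorem minDegree_alternating_subsets_le_general (m k : ℕ) (hm : 3 ≤ m) :
    minDegree (alternatingGroup (Fin m)) (kSubsets m k) ≤ 3 * (m - 2).choose (k - 1) := by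
  obtain ⟨n, rfl⟩ : ∃ n, m = n + 3 := ⟨m - 3, by omega⟩
  have hσ := Fin.isThreeCycle_cycleRange_two (n := n)
  simpa only [hσ.card_support] using kSubsets.minDegree_le hσ.mem_alternatingGroup hσ.ne_one

/-- For `m ≥ 3` and `1 ≤ k ≤ m/2`, the minimal degree of `Alt(m)` acting on the `k`-element
subsets of `{1,…,m}` is at most `3·C(m-2, k-1)`. -/
theorem minDegree_alternating_subsets_le (m k : ℕ) (hm : 3 ≤ m) (hk1 : 1 ≤ k)
    (hk2 : 2 * k ≤ m) :
    minDegree (alternatingGroup (Fin m)) (kSubsets m k) ≤ 3 * (m - 2).choose (k - 1) :=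
  minDegree_alternating_subsets_le_general m k hm
end

section
/- For all real numbers m, r, k with m ≥ 20, r ≥ 40, and 1 ≤ k ≤ m/2, one has log₂ m + (log₂ r)/m ≤ (r·k/72)·(log₂(m/k))². -/
-- v ≤ 1.9222 from v² ≤ 3.69452806
lemma aux_vup (v : ℝ) (h1 : 1 ≤ v) (h2 : v ^ 2 ≤ 3.69452806) : v ≤ 1.9222 := by
  nlinarith [sq_nonneg (v - 1.9222)]

-- chord bound for log on [1, e²/2]
lemma aux_chord (l2 v lv : ℝ) (hl2b : l2 < 0.6931471808) (hl2p : 0 < l2)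
    (hv1 : 1 ≤ v) (hvup : v ≤ 1.9222) (hvlb : v - 1 ≤ v * lv) :
    l2 / 2 * (v ^ 2 - 1) ≤ 2 * lv := by
  have hvp : 0 < v := by linarith
  have key : v * (l2 / 2 * (v ^ 2 - 1)) ≤ v * (2 * lv) := by
    nlinarith [mul_nonneg (sub_nonneg.mpr hv1) (sub_nonneg.mpr hvup),
      mul_nonneg (mul_nonneg (sub_nonneg.mpr hv1) (sub_nonneg.mpr hvup)) hl2p.le]
  exact le_of_mul_le_mul_left key hvp

lemma aux_sq (s c : ℝ) (hs : 2 ≤ s) (h : 1 + (s - 2) / 4 ≤ c) : s / 2 ≤ c ^ 2 := by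
  nlinarith [sq_nonneg (s - 2)]

lemma aux_smallcase_final (X m : ℝ) (hm : 20 ≤ m)
    (hX : X ≤ 5 + (m / 20 - 1) * (13 / 9)) (h6 : 6 / m ≤ 3 / 10) :
    X + 6 / m ≤ 5 * m / 18 := by linarith

lemma aux_largecase_final (X : ℝ) (hX : 4 ≤ X) : X + 3 / 10 ≤ 5 / 9 * X ^ 2 := by
  nlinarith [sq_nonneg (X - 4)]

lemma aux_A (l2 lm m : ℝ) (hl2a : 0.6931471803 < l2) (hl2p : 0 < l2)
    (hm : 20 ≤ m) (h : lm ≤ 5 * l2 + (m / 20 - 1)) :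
    lm / l2 ≤ 5 + (m / 20 - 1) * (13 / 9) := by
  rw [div_le_iff₀ hl2p]
  have hc0 : (0:ℝ) ≤ m / 20 - 1 := by linarith
  nlinarith [mul_le_mul_of_nonneg_left (show (9:ℝ)/13 ≤ l2 by linarith) hc0]

lemma core_ineq (m k : ℝ) (hm : 20 ≤ m) (hk1 : 1 ≤ k) (hk2 : k ≤ m / 2) :
    Real.log m / Real.log 2 + 6 / m ≤
      (5 * k / 9) * ((Real.log m - Real.log k) / Real.log 2) ^ 2 := by
  have hl2a : (0.6931471803 : ℝ) < Real.log 2 := Real.log_two_gt_d9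
  have hl2b : Real.log 2 < 0.6931471808 := Real.log_two_lt_d9
  have hl2pos : (0 : ℝ) < Real.log 2 := by linarith
  have hmpos : (0 : ℝ) < m := by linarith
  have hkpos : (0 : ℝ) < k := by linarith
  have hlk0 : 0 ≤ Real.log k := Real.log_nonneg hk1
  have hlm0 : 0 ≤ Real.log m := Real.log_nonneg (by linarith)
  set L : ℝ := Real.log m - Real.log k with hL
  have hls : Real.log (m / k) = L := Real.log_div (by linarith) (by linarith)
  have hs2 : 2 ≤ m / k := (le_div_iff₀ hkpos).mpr (by linarith)
  have hLl2 : Real.log 2 ≤ L := by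
    rw [← hls]; exact Real.log_le_log (by norm_num) hs2
  have h6m : 6 / m ≤ 3 / 10 := by
    rw [div_le_iff₀ hmpos]; linarith
  rcases le_total L 2 with hc | hc
  · -- small case : m/k ≤ e^2
    set s : ℝ := m / k with hsdef
    set u : ℝ := s / 2 with hudef
    have hu1 : 1 ≤ u := by rw [hudef]; linarith
    have hupos : 0 < u := by linarith
    have hlu : Real.log u = L - Real.log 2 := by
      rw [hudef, Real.log_div (by linarith) (by norm_num), hsdef, hls]
    have hlu2 : Real.log u ≤ 2 - Real.log 2 := by rw [hlu]; linarith
    have huup : u ≤ 3.69452806 := by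
      have h1 : u = Real.exp (Real.log u) := (Real.exp_log hupos).symm
      have h2 : Real.exp (Real.log u) ≤ Real.exp (2 - Real.log 2) :=
        Real.exp_le_exp.mpr hlu2
      have h3 : Real.exp (2 - Real.log 2) = Real.exp 1 * Real.exp 1 / 2 := by
        rw [Real.exp_sub, Real.exp_log (by norm_num : (0:ℝ) < 2)]
        rw [show (2:ℝ) = 1 + 1 by norm_num, Real.exp_add]
      have h4 : Real.exp 1 < 2.7182818286 := Real.exp_one_lt_d9
      have h5 : 0 < Real.exp 1 := Real.exp_pos 1
      nlinarith [mul_self_le_mul_self h5.le h4.le]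
    set v : ℝ := Real.sqrt u with hvdef
    have hv2 : v ^ 2 = u := Real.sq_sqrt hupos.le
    have hv1 : 1 ≤ v := Real.one_le_sqrt.mpr hu1
    have hvpos : 0 < v := by linarith
    have hvlog : Real.log v = Real.log u / 2 := Real.log_sqrt hupos.le
    have hvlb : v - 1 ≤ v * Real.log v := by
      have h1 : Real.log v⁻¹ ≤ v⁻¹ - 1 :=
        Real.log_le_sub_one_of_pos (by positivity)
      rw [Real.log_inv] at h1
      have h2 : v * (1 - v⁻¹) ≤ v * Real.log v :=
        mul_le_mul_of_nonneg_left (by linarith) hvpos.le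
      have h3 : v * (1 - v⁻¹) = v - 1 := by field_simp
      linarith
    have hvup : v ≤ 1.9222 := aux_vup v hv1 (by rw [hv2]; exact huup)
    have claimA : Real.log 2 / 2 * (u - 1) ≤ Real.log u := by
      have := aux_chord (Real.log 2) v (Real.log v) hl2b hl2pos hv1 hvup hvlb
      rw [hv2, hvlog] at this; linarith
    have hchord : 1 + (s - 2) / 4 ≤ L / Real.log 2 := by
      rw [le_div_iff₀ hl2pos]
      have hu' : u - 1 = (s - 2) / 2 := by rw [hudef]; ring
      nlinarith [claimA]
    have hsq : s / 2 ≤ (L / Real.log 2) ^ 2 := aux_sq s _ hs2 hchord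
    have hrhs : 5 * m / 18 ≤ (5 * k / 9) * (L / Real.log 2) ^ 2 := by
      have h1 : (5 * k / 9) * (s / 2) ≤ (5 * k / 9) * (L / Real.log 2) ^ 2 :=
        mul_le_mul_of_nonneg_left hsq (by positivity)
      have h2 : (5 * k / 9) * (s / 2) = 5 * m / 18 := by
        rw [hsdef]; field_simp; ring
      linarith
    have hlm_up : Real.log m ≤ 5 * Real.log 2 + (m / 20 - 1) := by
      have h1 : Real.log (m / 20) ≤ m / 20 - 1 :=
        Real.log_le_sub_one_of_pos (by positivity)
      have h2 : Real.log (m / 20) = Real.log m - Real.log 20 :=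
        Real.log_div (by linarith) (by norm_num)
      have h3 : Real.log 20 ≤ Real.log 32 := Real.log_le_log (by norm_num) (by norm_num)
      have h4 : Real.log 32 = 5 * Real.log 2 := by
        rw [show (32:ℝ) = 2 ^ (5:ℕ) by norm_num, Real.log_pow]; norm_num
      linarith
    have hA : Real.log m / Real.log 2 ≤ 5 + (m / 20 - 1) * (13 / 9) :=
      aux_A (Real.log 2) (Real.log m) m hl2a hl2pos hm hlm_up
    have := aux_smallcase_final (Real.log m / Real.log 2) m hm hA h6m
    linarith
  · -- large case : L ≥ 2
    set w : ℝ := Real.sqrt k with hwdef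
    have hw2 : w ^ 2 = k := Real.sq_sqrt hkpos.le
    have hw1 : 1 ≤ w := Real.one_le_sqrt.mpr hk1
    have hwlog : Real.log w = Real.log k / 2 := Real.log_sqrt hkpos.le
    have hlk_up : Real.log k ≤ 2 * (w - 1) := by
      have := Real.log_le_sub_one_of_pos (show (0:ℝ) < w by linarith)
      linarith [hwlog]
    have hXw : Real.log m / Real.log 2 ≤ (L / Real.log 2) * w := by
      have h0 : (0:ℝ) ≤ w - 1 := by linarith
      have h1 : 2 * (w - 1) ≤ L * (w - 1) := mul_le_mul_of_nonneg_right hc h0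
      have h3 : L * (w - 1) = L * w - L := by ring
      rw [div_le_iff₀ hl2pos]
      have heq : (L / Real.log 2) * w * Real.log 2 = L * w := by field_simp
      rw [heq]; linarith
    have hLnn : 0 ≤ L / Real.log 2 := by positivity
    have hXnn : 0 ≤ Real.log m / Real.log 2 := by positivity
    have hsqX : (Real.log m / Real.log 2) ^ 2 ≤ k * (L / Real.log 2) ^ 2 := by
      have h1 := mul_self_le_mul_self hXnn hXw
      calc (Real.log m / Real.log 2) ^ 2
          = (Real.log m / Real.log 2) * (Real.log m / Real.log 2) := by ring
        _ ≤ ((L / Real.log 2) * w) * ((L / Real.log 2) * w) := h1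
        _ = k * (L / Real.log 2) ^ 2 := by rw [← hw2]; ring
    have hX4 : 4 ≤ Real.log m / Real.log 2 := by
      rw [le_div_iff₀ hl2pos]
      have h1 : Real.log 16 ≤ Real.log m := Real.log_le_log (by norm_num) (by linarith)
      have h2 : Real.log 16 = 4 * Real.log 2 := by
        rw [show (16:ℝ) = 2 ^ (4:ℕ) by norm_num, Real.log_pow]; norm_num
      linarith
    have hfin := aux_largecase_final (Real.log m / Real.log 2) hX4
    have hlast : (5 / 9) * (Real.log m / Real.log 2) ^ 2 ≤
        (5 * k / 9) * (L / Real.log 2) ^ 2 := by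
      have h1 := mul_le_mul_of_nonneg_left hsqX (by norm_num : (0:ℝ) ≤ 5 / 9)
      have heq : (5 * k / 9) * (L / Real.log 2) ^ 2 = 5 / 9 * (k * (L / Real.log 2) ^ 2) := by ring
      linarith
    linarith

/-- For all real `m ≥ 20`, `r ≥ 40` and `1 ≤ k ≤ m/2`, one has
`log₂ m + (log₂ r)/m ≤ (r·k/72)·(log₂(m/k))²`. -/
theorem key_analytic_inequality (m r k : ℝ) (hm : 20 ≤ m) (hr : 40 ≤ r)
    (hk1 : 1 ≤ k) (hk2 : k ≤ m / 2) :
    Real.logb 2 m + Real.logb 2 r / m ≤ (r * k / 72) * (Real.logb 2 (m / k)) ^ 2 := by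
  have hl2a : (0.6931471803 : ℝ) < Real.log 2 := Real.log_two_gt_d9
  have hl2pos : (0 : ℝ) < Real.log 2 := by linarith
  have hmpos : (0 : ℝ) < m := by linarith
  have hrpos : (0 : ℝ) < r := by linarith
  have hkpos : (0 : ℝ) < k := by linarith
  simp only [Real.logb]
  rw [Real.log_div (ne_of_gt hmpos) (ne_of_gt hkpos)]
  have hcore := core_ineq m k hm hk1 hk2
  set Q : ℝ := ((Real.log m - Real.log k) / Real.log 2) ^ 2 with hQ
  have hQnn : 0 ≤ Q := sq_nonneg _
  set X : ℝ := Real.log m / Real.log 2 with hX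
  have hXnn : 0 ≤ X := div_nonneg (Real.log_nonneg (by linarith)) hl2pos.le
  -- log 40 bounds
  have l40b : 5 * Real.log 2 ≤ Real.log 40 := by
    have h3 : Real.log 32 ≤ Real.log 40 := Real.log_le_log (by norm_num) (by norm_num)
    have h4 : Real.log 32 = 5 * Real.log 2 := by
      rw [show (32:ℝ) = 2 ^ (5:ℕ) by norm_num, Real.log_pow]; norm_num
    linarith
  have l40a : Real.log 40 ≤ 6 * Real.log 2 := by
    have h3 : Real.log 40 ≤ Real.log 64 := Real.log_le_log (by norm_num) (by norm_num)
    have h4 : Real.log 64 = 6 * Real.log 2 := by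
      rw [show (64:ℝ) = 2 ^ (6:ℕ) by norm_num, Real.log_pow]; norm_num
    linarith
  have h0 : (0:ℝ) ≤ r / 40 - 1 := by linarith
  have hlr : Real.log r ≤ (r / 40) * Real.log 40 := by
    have h1 : Real.log (r / 40) ≤ r / 40 - 1 :=
      Real.log_le_sub_one_of_pos (by positivity)
    have h2 : Real.log (r / 40) = Real.log r - Real.log 40 :=
      Real.log_div (ne_of_gt hrpos) (by norm_num)
    have h3 : (1:ℝ) ≤ Real.log 40 := by linarith
    have h4 : (r / 40 - 1) * 1 ≤ (r / 40 - 1) * Real.log 40 :=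
      mul_le_mul_of_nonneg_left h3 h0
    nlinarith
  have hlr2 : Real.log r ≤ (r / 40) * (6 * Real.log 2) := by
    have := mul_le_mul_of_nonneg_left l40a (show (0:ℝ) ≤ r / 40 by linarith)
    linarith
  have hstep1 : Real.log r / Real.log 2 / m ≤ (r / 40) * (6 / m) := by
    have h1 : Real.log r / Real.log 2 / m ≤ ((r / 40) * (6 * Real.log 2)) / Real.log 2 / m := by
      gcongr
    have h2 : ((r / 40) * (6 * Real.log 2)) / Real.log 2 / m = (r / 40) * (6 / m) := by
      field_simp
    linarith
  have hstep2 : X + (r / 40) * (6 / m) ≤ (r / 40) * (X + 6 / m) := by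
    have h1 : (1:ℝ) * X ≤ (r / 40) * X :=
      mul_le_mul_of_nonneg_right (by linarith) hXnn
    nlinarith
  have hstep3 : (r / 40) * (X + 6 / m) ≤ (r / 40) * ((5 * k / 9) * Q) :=
    mul_le_mul_of_nonneg_left hcore (by positivity)
  have heq : (r / 40) * ((5 * k / 9) * Q) = (r * k / 72) * Q := by ring
  linarith
end

section
/- Let d ≥ 1, let F = 𝔽₂ be the field with two elements, let V = F^d, let G = AGL_d(2) = AGL(V) be the full affine group acting naturally on V, and set n = 2^d. Then μ(G)·b(G) ≥ 2^{d−1}·(d+1); in particular μ(G)·b(G) > (n·log₂ n)/2. -/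
open Module

def IsBase (G : Type*) {Ω : Type*} [Group G] [MulAction G Ω] (B : Finset Ω) : Prop :=
  ∀ g : G, (∀ ω ∈ B, g • ω = ω) → g = 1

section PermutationGroup

variable {G Ω : Type*} [Group G] [MulAction G Ω]

theorem le_minDegree [Nontrivial G] {m : ℕ}
    (h : ∀ g : G, g ≠ 1 → m ≤ Nat.card {ω : Ω | g • ω ≠ ω}) : m ≤ minDegree G Ω := by
  obtain ⟨g, hg⟩ := exists_ne (1 : G)
  refine le_csInf ⟨_, g, hg, rfl⟩ ?_
  rintro _ ⟨g, hg, rfl⟩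
  exact h g hg

theorem two_le_minDegree [Nontrivial G] [FaithfulSMul G Ω] [Finite Ω] : 2 ≤ minDegree G Ω := by
  refine le_minDegree fun g hg => ?_
  obtain ⟨ω, hω⟩ : ∃ ω : Ω, g • ω ≠ ω := by
    by_contra! h
    exact hg (eq_of_smul_eq_smul fun ω => by rw [h, one_smul])
  have hgω : g • g • ω ≠ g • ω := fun h => hω (smul_left_cancel g h)
  calc 2 = ({ω, g • ω} : Set Ω).ncard := (Set.ncard_pair hω.symm).symm
    _ ≤ _ := Set.ncard_le_ncard (by rintro _ (rfl | rfl) <;> assumption)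

theorem le_baseSize [Finite Ω] [FaithfulSMul G Ω] {m : ℕ}
    (h : ∀ B : Finset Ω, IsBase G B → m ≤ B.card) : m ≤ baseSize G Ω := by
  have : Fintype Ω := Fintype.ofFinite Ω
  have univ_isBase : IsBase G (Finset.univ : Finset Ω) := fun g hg =>
    eq_of_smul_eq_smul fun ω => by rw [hg ω (Finset.mem_univ ω), one_smul]
  refine le_csInf ⟨_, _, rfl, univ_isBase⟩ ?_
  rintro _ ⟨B, rfl, hB⟩
  exact h B hB

theorem one_le_baseSize [Nontrivial G] [Finite Ω] [FaithfulSMul G Ω] : 1 ≤ baseSize G Ω := by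
  refine le_baseSize fun B hB => Finset.one_le_card.2 ?_
  by_contra! rfl
  obtain ⟨g, hg⟩ := exists_ne (1 : G)
  exact hg (hB g (by simp))

end PermutationGroup

section AffineGroup

variable {k V : Type*}

section Ring

variable [Ring k] [AddCommGroup V] [Module k V]

theorem AffineEquiv.linear_sub (g : V ≃ᵃ[k] V) (v w : V) : g.linear (v - w) = g v - g w :=
  g.toAffineMap.linearMap_vsub v w

instance : FaithfulSMul (V ≃ᵃ[k] V) V := ⟨fun h => AffineEquiv.ext h⟩

instance [Nontrivial V] : Nontrivial (V ≃ᵃ[k] V) := by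
  obtain ⟨v, hv⟩ := exists_ne (0 : V)
  refine ⟨⟨AffineEquiv.constVAdd k V v, 1, fun h => hv ?_⟩⟩
  simpa using congr($h 0)

end Ring

variable [Field k] [AddCommGroup V] [Module k V]

theorem AffineEquiv.ncard_fixedPoints_le [Finite k] [FiniteDimensional k V] {g : V ≃ᵃ[k] V}
    (hg : g ≠ 1) : {v | g v = v}.ncard ≤ Nat.card k ^ (finrank k V - 1) := by
  rcases Set.eq_empty_or_nonempty {v | g v = v} with h | ⟨v₀, hv₀ : g v₀ = v₀⟩
  · simp [h]
  set W := LinearMap.fixedSubmodule (g.linear : V →ₗ[k] V)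
  have mem_W {v : V} : v - v₀ ∈ W ↔ g v = v := by
    rw [LinearMap.mem_fixedSubmodule_iff, LinearEquiv.coe_coe, g.linear_sub, hv₀, sub_left_inj]
  have hW : W ≠ ⊤ := fun hW => hg (AffineEquiv.ext fun v => mem_W.1 (hW ▸ Submodule.mem_top))
  have : Finite V := Module.finite_of_finite k
  -- the fixed points lie in the coset `v₀ + W`
  calc {v | g v = v}.ncard ≤ Nat.card W :=
        Nat.card_le_card_of_injective (fun v => ⟨v.1 - v₀, mem_W.2 v.2⟩)
          fun v w h => Subtype.ext (sub_left_injective (congrArg Subtype.val h))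
    _ = Nat.card k ^ finrank k W := Module.natCard_eq_pow_finrank
    _ ≤ Nat.card k ^ (finrank k V - 1) := by
        have := Submodule.finrank_lt hW
        exact Nat.pow_le_pow_right Nat.card_pos (by omega)

theorem card_pow_pred_mul_pred_le_minDegree [Finite k] [FiniteDimensional k V] [Nontrivial V] :
    Nat.card k ^ (finrank k V - 1) * (Nat.card k - 1) ≤ minDegree (V ≃ᵃ[k] V) V := by
  have : Finite V := Module.finite_of_finite k
  refine le_minDegree fun g hg => ?_
  have hfix := g.ncard_fixedPoints_le hg
  have hsum := Set.ncard_add_ncard_compl {v | g v = v}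
  rw [Module.natCard_eq_pow_finrank (K := k), ← Nat.sub_one_add_one Module.finrank_pos.ne',
    pow_succ] at hsum
  rw [Nat.card_coe_set_eq, Nat.mul_sub_one]
  change _ ≤ {v | g v = v}ᶜ.ncard
  omega

theorem LinearEquiv.exists_ne_refl_le_fixedSubmodule [FiniteDimensional k V]
    (hV : 2 ≤ finrank k V) {W : Submodule k V} (hW : W ≠ ⊤) :
    ∃ T : V ≃ₗ[k] V, T ≠ LinearEquiv.refl k V ∧
      W ≤ LinearMap.fixedSubmodule (T : V →ₗ[k] V) := by
  obtain ⟨φ, hφ, hWφ⟩ := W.exists_le_ker_of_lt_top (lt_top_iff_ne_top.2 hW)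
  have hker : LinearMap.ker φ ≠ ⊥ := by
    have hrange := Submodule.finrank_le (LinearMap.range φ)
    have := LinearMap.finrank_range_add_finrank_ker φ
    rw [Module.finrank_self] at hrange
    intro h
    rw [h, finrank_bot] at this
    omega
  obtain ⟨u, hu, hu0⟩ := Submodule.exists_mem_ne_zero_of_ne_bot hker
  refine ⟨LinearEquiv.transvection hu, fun hT => ?_,
    hWφ.trans (LinearEquiv.ker_le_fixedSubmodule_transvection hu)⟩
  obtain ⟨x, hx⟩ : ∃ x, φ x ≠ 0 := by
    by_contra! h
    exact hφ (LinearMap.ext h)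
  have hfix : x + φ x • u = x := congr($hT x)
  rw [add_eq_left, smul_eq_zero] at hfix
  exact hfix.elim hx hu0

def LinearEquiv.toAffineEquivAt (T : V ≃ₗ[k] V) (p : V) : V ≃ᵃ[k] V :=
  (AffineEquiv.vaddConst k p).symm.trans (T.toAffineEquiv.trans (AffineEquiv.vaddConst k p))

theorem LinearEquiv.toAffineEquivAt_apply (T : V ≃ₗ[k] V) (p v : V) :
    T.toAffineEquivAt p v = T (v - p) + p :=
  rfl

theorem LinearEquiv.toAffineEquivAt_ne_one {T : V ≃ₗ[k] V} (hT : T ≠ LinearEquiv.refl k V)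
    (p : V) : T.toAffineEquivAt p ≠ 1 := by
  refine fun h => hT (LinearEquiv.ext fun v => ?_)
  simpa [T.toAffineEquivAt_apply] using congr($h (v + p))

theorem AffineEquiv.exists_ne_one_forall_mem_fixed [FiniteDimensional k V]
    (hV : 2 ≤ finrank k V) {B : Finset V} (hB : B.card ≤ finrank k V) :
    ∃ g : V ≃ᵃ[k] V, g ≠ 1 ∧ ∀ v ∈ B, g v = v := by
  have : Nontrivial V := Module.nontrivial_of_finrank_pos (R := k) (by omega)
  rcases B.eq_empty_or_nonempty with rfl | ⟨p, hp⟩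
  · obtain ⟨g, hg⟩ := exists_ne (1 : V ≃ᵃ[k] V)
    exact ⟨g, hg, by simp⟩
  classical
  have hspan : finrank k (vectorSpan k (B : Set V)) ≤ B.card - 1 := by
    have hcard := (Nat.sub_one_add_one (Finset.card_ne_zero.2 ⟨p, hp⟩)).symm
    have := finrank_vectorSpan_image_finset_le k id B hcard
    rwa [Finset.image_id] at this
  obtain ⟨T, hT, hspanT⟩ := LinearEquiv.exists_ne_refl_le_fixedSubmodule hV
    (W := vectorSpan k (B : Set V)) (fun h => by rw [h, finrank_top] at hspan; omega)
  refine ⟨T.toAffineEquivAt p, LinearEquiv.toAffineEquivAt_ne_one hT p, fun v hv => ?_⟩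
  have : T (v - p) = v - p := hspanT (vsub_mem_vectorSpan k hv hp)
  rw [T.toAffineEquivAt_apply, this, sub_add_cancel]

theorem finrank_add_one_le_baseSize [FiniteDimensional k V] [Finite k] (hV : 2 ≤ finrank k V) :
    finrank k V + 1 ≤ baseSize (V ≃ᵃ[k] V) V := by
  have : Finite V := Module.finite_of_finite k
  refine le_baseSize fun B hB => ?_
  by_contra! hcard
  obtain ⟨g, hg, hfix⟩ := AffineEquiv.exists_ne_one_forall_mem_fixed hV (B := B) (by omega)
  exact hg (hB g hfix)

end AffineGroup

theorem two_pow_pred_mul_succ_le_minDegree_mul_baseSize {V : Type*} [AddCommGroup V]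
    [Module (ZMod 2) V] [FiniteDimensional (ZMod 2) V] (hV : 1 ≤ finrank (ZMod 2) V) :
    2 ^ (finrank (ZMod 2) V - 1) * (finrank (ZMod 2) V + 1) ≤
      minDegree (V ≃ᵃ[ZMod 2] V) V * baseSize (V ≃ᵃ[ZMod 2] V) V := by
  have : Nontrivial V := Module.nontrivial_of_finrank_pos (R := ZMod 2) hV
  have : Finite V := Module.finite_of_finite (ZMod 2)
  rcases hV.eq_or_lt with hV | hV
  · rw [← hV]
    simpa using Nat.mul_le_mul two_le_minDegree one_le_baseSize
  · refine Nat.mul_le_mul ?_ (finrank_add_one_le_baseSize hV)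
    simpa using card_pow_pred_mul_pred_le_minDegree (k := ZMod 2) (V := V)

/-- For `d ≥ 1` and `G = AGL_d(2)` acting naturally on `V = 𝔽₂^d` of cardinality `n = 2^d`,
one has `μ(G)·b(G) ≥ 2^(d-1)·(d+1)`; in particular `μ(G)·b(G) > (n·log₂ n)/2 = (2^d·d)/2`. -/
theorem minDegree_mul_baseSize_AGL_two (d : ℕ) (hd : 1 ≤ d) :
    2 ^ (d - 1) * (d + 1) ≤
      minDegree ((Fin d → ZMod 2) ≃ᵃ[ZMod 2] (Fin d → ZMod 2)) (Fin d → ZMod 2) *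
        baseSize ((Fin d → ZMod 2) ≃ᵃ[ZMod 2] (Fin d → ZMod 2)) (Fin d → ZMod 2) ∧
    ((2 : ℝ) ^ d * d) / 2 <
      (minDegree ((Fin d → ZMod 2) ≃ᵃ[ZMod 2] (Fin d → ZMod 2)) (Fin d → ZMod 2) : ℝ) *
        (baseSize ((Fin d → ZMod 2) ≃ᵃ[ZMod 2] (Fin d → ZMod 2)) (Fin d → ZMod 2) : ℝ) := by
  have hprod := two_pow_pred_mul_succ_le_minDegree_mul_baseSize (V := Fin d → ZMod 2)
    (by simpa using hd)
  rw [Module.finrank_fin_fun] at hprod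
  refine ⟨hprod, ?_⟩
  have hpow : (2 : ℝ) ^ d = 2 ^ (d - 1) * 2 := by rw [← pow_succ, Nat.sub_add_cancel hd]
  calc ((2 : ℝ) ^ d * d) / 2 = 2 ^ (d - 1) * d := by rw [hpow]; ring
    _ < 2 ^ (d - 1) * (d + 1) := by gcongr; exact lt_add_one _
    _ ≤ _ := by exact_mod_cast hprod
end

section
/- For all integers a ≥ 3 and b ≥ 2, one has (ab)! / ((a!)^b · b!) ≥ (b · 3^{−3/2})^{(a−1)·b}, as an inequality of real numbers. Equivalently, (ab)! ≥ (a!)^b · b! · (b/3^{3/2})^{(a−1)b}. -/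
lemma pow_self_le_three_pow_mul_factorial : ∀ n : ℕ, (n : ℝ) ^ n ≤ 3 ^ n * n.factorial := by
  intro n
  induction n with
  | zero => simp
  | succ n ih =>
    have hstep : ((n + 1 : ℝ)) ^ n ≤ 3 * (n : ℝ) ^ n := by
      rcases Nat.eq_zero_or_pos n with h | h
      · subst h; norm_num
      · have hn : (0 : ℝ) < n := by exact_mod_cast h
        have h1 : ((n + 1 : ℝ)) = n * (1 + 1 / n) := by field_simp
        have h2 : (1 + 1 / (n : ℝ)) ≤ Real.exp (1 / n) := by
          have := Real.add_one_le_exp (1 / (n : ℝ)); linarith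
        have h3 : (1 + 1 / (n : ℝ)) ^ n ≤ Real.exp (1 / n) ^ n := by
          apply pow_le_pow_left₀ (by positivity) h2
        have h4 : Real.exp (1 / (n : ℝ)) ^ n = Real.exp 1 := by
          rw [← Real.exp_nat_mul]; congr 1; field_simp
        have h5 : Real.exp 1 ≤ 3 := by
          have := Real.exp_one_lt_d9; linarith
        calc ((n + 1 : ℝ)) ^ n = (n : ℝ) ^ n * (1 + 1 / n) ^ n := by
              rw [h1, mul_pow]
          _ ≤ (n : ℝ) ^ n * 3 := by
              have : (1 + 1 / (n : ℝ)) ^ n ≤ 3 := by rw [h4] at h3; linarith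
              exact mul_le_mul_of_nonneg_left this (by positivity)
          _ = 3 * (n : ℝ) ^ n := by ring
    have hnn : (0 : ℝ) ≤ (n : ℝ) + 1 := by positivity
    calc ((n + 1 : ℕ) : ℝ) ^ (n + 1) = ((n + 1 : ℝ)) ^ n * ((n : ℝ) + 1) := by
          push_cast; ring
      _ ≤ 3 * (n : ℝ) ^ n * ((n : ℝ) + 1) := mul_le_mul_of_nonneg_right hstep hnn
      _ ≤ 3 * (3 ^ n * n.factorial) * ((n : ℝ) + 1) := by
          have := mul_le_mul_of_nonneg_right ih hnn
          nlinarith [ih, hnn]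
      _ = 3 ^ (n + 1) * (n + 1).factorial := by
          rw [Nat.factorial_succ]; push_cast; ring

/-- For integers `a ≥ 3` and `b ≥ 2`, the number `(ab)!/((a!)^b·b!)` of partitions of a set of
size `ab` into `b` blocks of size `a` is at least `(b·3^(-3/2))^((a-1)·b)`. -/
theorem factorial_partition_lower_bound (a b : ℕ) (ha : 3 ≤ a) (hb : 2 ≤ b) :
    ((b : ℝ) * (3 : ℝ) ^ (-(3 : ℝ) / 2)) ^ ((a - 1) * b) ≤
      (((a * b).factorial : ℝ)) / (((a.factorial : ℝ)) ^ b * (b.factorial : ℝ)) := by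
  set c : ℝ := (3 : ℝ) ^ (-(3 : ℝ) / 2) with hc
  set m : ℕ := (a - 1) * b with hm
  have ha' : (3:ℝ) ≤ (a:ℝ) := by exact_mod_cast ha
  have hb' : (2:ℝ) ≤ (b:ℝ) := by exact_mod_cast hb
  have hcpos : 0 < c := Real.rpow_pos_of_pos (by norm_num) _
  have hfacpos : (0:ℝ) < ((a.factorial : ℝ)) ^ b * (b.factorial : ℝ) := by positivity
  rw [le_div_iff₀ hfacpos]
  -- cast of m
  have hmcast : (m : ℝ) = ((a:ℝ) - 1) * b := by
    rw [hm]; push_cast [Nat.cast_sub (by omega : 1 ≤ a)]; ring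
  -- key exponent inequality : c^m * 3^(a*b) ≤ 1
  have hkey : c ^ m * (3:ℝ) ^ (a*b) ≤ 1 := by
    have h1 : c ^ m = (3:ℝ) ^ ((-(3:ℝ)/2) * m) := by
      rw [hc, ← Real.rpow_natCast ((3:ℝ) ^ (-(3:ℝ)/2)) m, ← Real.rpow_mul (by norm_num)]
    have h2 : (3:ℝ) ^ (a*b) = (3:ℝ) ^ (((a*b : ℕ)):ℝ) := by
      rw [Real.rpow_natCast]
    rw [h1, h2, ← Real.rpow_add (by norm_num)]
    have h3 : (-(3:ℝ)/2) * m + ((a*b : ℕ):ℝ) ≤ 0 := by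
      rw [hmcast]; push_cast; nlinarith
    calc (3:ℝ) ^ ((-(3:ℝ)/2) * m + ((a*b:ℕ):ℝ)) ≤ (3:ℝ) ^ (0:ℝ) :=
          Real.rpow_le_rpow_of_exponent_le (by norm_num) h3
      _ = 1 := Real.rpow_zero 3
  have h2 : ((a.factorial : ℝ)) ^ b ≤ ((a:ℝ)^a)^b := by
    exact pow_le_pow_left₀ (by positivity) (by exact_mod_cast a.factorial_le_pow) b
  have h3 : ((b.factorial : ℝ)) ≤ (b:ℝ)^b := by exact_mod_cast b.factorial_le_pow
  have h1 : ((a:ℝ)*(b:ℝ))^(a*b) / 3^(a*b) ≤ ((a*b).factorial : ℝ) := by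
    rw [div_le_iff₀ (by positivity)]
    have := pow_self_le_three_pow_mul_factorial (a*b)
    push_cast at this ⊢
    linarith
  calc ((b:ℝ) * c) ^ m * (((a.factorial : ℝ)) ^ b * (b.factorial : ℝ))
      ≤ ((b:ℝ) * c) ^ m * (((a:ℝ)^a)^b * (b:ℝ)^b) :=
        mul_le_mul_of_nonneg_left
          (mul_le_mul h2 h3 (by positivity) (by positivity)) (by positivity)
    _ = (c ^ m * (3:ℝ)^(a*b)) * (((a:ℝ)*(b:ℝ))^(a*b) / 3^(a*b)) := by
        have hsplit : (a:ℝ)^(a*b) * (b:ℝ)^(a*b) = ((a:ℝ)^a)^b * ((b:ℝ)^m * (b:ℝ)^b) := by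
          have hexp : (a - 1) * b + b = a * b := by
            cases a with
            | zero => omega
            | succ n => simp [Nat.succ_sub_one, Nat.succ_mul]
          rw [← pow_mul, ← pow_add, hm, hexp]
        rw [mul_pow, mul_pow, hsplit]
        have h30 : (3:ℝ)^(a*b) ≠ 0 := by positivity
        field_simp
    _ ≤ 1 * (((a:ℝ)*(b:ℝ))^(a*b) / 3^(a*b)) :=
        mul_le_mul_of_nonneg_right hkey (by positivity)
    _ = ((a:ℝ)*(b:ℝ))^(a*b) / 3^(a*b) := one_mul _
    _ ≤ ((a*b).factorial : ℝ) := h1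
end
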